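/- Fix partitions λ¹,…,λ^r and for I ⊆ [r] set u_I = hook_α(λ^I) where λ^I = ⊕_{i∈I} λ^i is the entry-wise sum and hook_α(λ) = ∏_{□∈λ}(α·a(□) + ℓ(□) + 1). Then for every H ⊆ [r] with |H| ≥ 2, the rational function ∏_{G⊆H} u_G^{(-1)^{|H|-|G|}} − 1 is O(α^{|H|-1}), i.e., divisible by α^{|H|-1} with no pole at α = 0. -/

import Mathlib

open scoped BigOperators

/-- Conjugate partition (0-indexed): `conjPart f c` is the height of the
column of index `c`, i.e. the number of rows `j` with `f j ≥ c+1`. -/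
def conjPart (f : ℕ →₀ ℕ) (c : ℕ) : ℕ :=
  (f.support.filter (fun j => c + 1 ≤ f j)).card

/-- The boxes of the Young diagram of `f` (0-indexed). -/
def cells (f : ℕ →₀ ℕ) : Finset (ℕ × ℕ) :=
  f.support.biUnion (fun j => (Finset.range (f j)).image (fun i => (i, j)))

/-- Arm-length of the box `b = (i,j)` (0-indexed). -/
def armL (f : ℕ →₀ ℕ) (b : ℕ × ℕ) : ℕ := f b.2 - (b.1 + 1)

/-- Leg-length of the box `b = (i,j)` (0-indexed). -/
def legL (f : ℕ →₀ ℕ) (b : ℕ × ℕ) : ℕ := conjPart f b.1 - (b.2 + 1)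

/-- The α-hook polynomial `hook_α(λ) = ∏_{□∈λ}(α·a(□) + ℓ(□) + 1)`,
viewed as a rational function in `α`. -/
noncomputable def hookA (f : ℕ →₀ ℕ) : RatFunc ℚ :=
  ∏ b ∈ cells f,
    (RatFunc.X * (armL f b : RatFunc ℚ) + (legL f b : RatFunc ℚ) + 1)

/-- No pole at `α = 0`. -/
def NoPoleAtZero (f : RatFunc ℚ) : Prop := Polynomial.eval 0 f.denom ≠ 0

/-- `f = O(α^k)`. -/
def IsBigO (k : ℕ) (f : RatFunc ℚ) : Prop :=
  ∃ g : RatFunc ℚ, NoPoleAtZero g ∧ f = RatFunc.X ^ k * g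

/-!
Take logarithmic derivatives in `α`. The boxes of a diagram `f` in row `j` with leg `w` have arms
filling the interval `[f j - f (j + w), f j - f (j + w + 1))`, whose endpoints are additive under
`⊕`. As `∑_{d < n} d ^ p` is a polynomial of degree `p + 1` in `n`, a sum over the boxes of
`c (leg) * arm ^ p` is a polynomial of degree `p + 1` in additive data, so its alternating sum over
`G ⊆ H` vanishes once `p + 1 < |H|`. The coefficient of `α ^ m` in the logarithmic derivative of
`hook_α` is such a sum with `p = m + 1`, and the logarithm of its value at `α = 0` is one with
`p = 0`. So the alternating product has constant term `1` and a logarithmic derivative divisible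
by `α ^ (|H| - 2)`, hence it is `1` modulo `α ^ (|H| - 1)`.
-/

open Finset

section Polynomial
open Polynomial

theorem sum_powerset_neg_one_pow_mul_eval_eq_zero {ι R : Type*} [CommRing R] (x : ι → R)
    (H : Finset ι) (p : R[X]) (hp : p.degree < H.card) :
    ∑ G ∈ H.powerset, (-1) ^ (H.card - G.card) * p.eval (∑ i ∈ G, x i) = 0 := by
  classical
  induction H using Finset.induction_on generalizing p with
  | empty =>
    have : p = 0 := degree_eq_bot.1 (by simpa using hp)
    simp [this]
  | @insert a H ha ih =>
    rw [card_insert_of_notMem ha, Nat.cast_succ] at hp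
    have hdiff : (taylor (x a) p - p).degree < H.card := by
      rcases eq_or_ne p 0 with rfl | hp0
      · simp
      refine (degree_sub_lt_left (degree_taylor p _) (by simpa using hp0)
        (leadingCoeff_taylor _ _)).trans_le ?_
      rw [degree_taylor]
      exact Order.le_of_lt_succ hp
    rw [sum_powerset_insert ha, ← ih _ hdiff, ← sum_add_distrib]
    refine sum_congr rfl fun G hG => ?_
    have hGH := mem_powerset.1 hG
    have haG : a ∉ G := fun h => ha (hGH h)
    rw [card_insert_of_notMem ha, card_insert_of_notMem haG, sum_insert haG, eval_sub, taylor_eval,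
      Nat.add_sub_add_right, Nat.succ_sub (card_le_card hGH), pow_succ, add_comm (x a)]
    ring

theorem exists_degree_le_eval_eq_sum_range_pow (K : Type*) [Field K] [CharZero K] (p : ℕ) :
    ∃ Q : K[X], Q.degree ≤ ↑(p + 1) ∧ ∀ n : ℕ, Q.eval (n : K) = ∑ d ∈ range n, (d : K) ^ p := by
  refine ⟨∑ i ∈ range (p + 1),
      C ((_root_.bernoulli i : K) * (p + 1).choose i / (p + 1)) * X ^ (p + 1 - i), ?_, fun n => ?_⟩
  · refine (degree_sum_le _ _).trans (Finset.sup_le fun i _ => (degree_C_mul_X_pow_le _ _).trans ?_)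
    exact_mod_cast Nat.sub_le _ _
  · have h := congrArg (Rat.cast : ℚ → K) (sum_range_pow n p)
    push_cast at h
    rw [h, eval_finsetSum]
    refine sum_congr rfl fun i _ => ?_
    simp only [eval_mul, eval_C, eval_pow, eval_X]
    ring

theorem X_pow_dvd_of_X_pow_dvd_coe {R : Type*} [CommSemiring R] {p : R[X]} {n : ℕ}
    (h : PowerSeries.X ^ n ∣ (p : PowerSeries R)) : X ^ n ∣ p := by
  rw [PowerSeries.X_pow_dvd_iff] at h
  rw [Polynomial.X_pow_dvd_iff]
  simpa only [Polynomial.coeff_coe] using h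

end Polynomial

theorem sum_powerset_neg_one_pow_mul_eq_sub {ι R : Type*} [CommRing R] (H : Finset ι)
    (f : Finset ι → R) :
    ∑ G ∈ H.powerset, (-1) ^ (H.card - G.card) * f G =
      ∑ G ∈ H.powerset with Even (H.card - G.card), f G -
        ∑ G ∈ H.powerset with ¬Even (H.card - G.card), f G := by
  rw [← sum_filter_add_sum_filter_not _ fun G => Even (H.card - G.card), sub_eq_add_neg,
    ← sum_neg_distrib]
  congr 1 <;> refine sum_congr rfl fun G hG => ?_
  · rw [(mem_filter.1 hG).2.neg_one_pow, one_mul]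
  · rw [(Nat.not_even_iff_odd.1 (mem_filter.1 hG).2).neg_one_pow, neg_one_mul]

theorem prod_powerset_zpow_neg_one_pow_eq_div {ι M : Type*} [DivisionCommMonoid M]
    (H : Finset ι) (F : Finset ι → M) :
    ∏ G ∈ H.powerset, F G ^ ((-1 : ℤ) ^ (H.card - G.card)) =
      (∏ G ∈ H.powerset with Even (H.card - G.card), F G) /
        ∏ G ∈ H.powerset with ¬Even (H.card - G.card), F G := by
  rw [← prod_filter_mul_prod_filter_not _ fun G => Even (H.card - G.card), div_eq_mul_inv,
    ← prod_inv_distrib]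
  congr 1 <;> refine prod_congr rfl fun G hG => ?_
  · rw [(mem_filter.1 hG).2.neg_one_pow, zpow_one]
  · rw [(Nat.not_even_iff_odd.1 (mem_filter.1 hG).2).neg_one_pow, zpow_neg_one]

theorem conjPart_eq_of_forall_lt_iff {f : ℕ →₀ ℕ} {i m : ℕ} (h : ∀ j, i < f j ↔ j < m) :
    conjPart f i = m := by
  rw [conjPart, ← card_range m]
  congr 1
  ext j
  simp only [mem_filter, Finsupp.mem_support_iff, mem_range, ← h j]
  omega

theorem sum_range_sum_Ico_eq {M : Type*} [AddCommMonoid M] (g : ℕ → M) {a : ℕ → ℕ}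
    (ha : Monotone a) (n : ℕ) :
    ∑ w ∈ range n, ∑ d ∈ Ico (a w) (a (w + 1)), g d = ∑ d ∈ Ico (a 0) (a n), g d := by
  induction n with
  | zero => simp
  | succ n ih => rw [sum_range_succ, ih, sum_Ico_consecutive _ (ha n.zero_le) (ha n.le_succ)]

theorem sum_cells_eq_sum_range {M : Type*} [AddCommMonoid M] {f : ℕ →₀ ℕ} {L : ℕ}
    (hL : f.support ⊆ range L) (g : ℕ × ℕ → M) :
    ∑ b ∈ cells f, g b = ∑ j ∈ range L, ∑ i ∈ range (f j), g (i, j) := by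
  classical
  rw [cells, sum_biUnion, sum_subset hL]
  · exact sum_congr rfl fun j _ => sum_image fun i _ i' _ h => (Prod.mk.inj h).1
  · intro j _ hj
    simp [Finsupp.notMem_support_iff.1 hj]
  · intro j _ j' _ hne
    simp only [Function.onFun, disjoint_left, mem_image]
    rintro _ ⟨i, _, rfl⟩ ⟨i', _, h⟩
    exact hne (Prod.mk.inj h).2.symm

theorem sum_cells_eq {M : Type*} [AddCommMonoid M] {f : ℕ →₀ ℕ} (hf : Antitone f) {L : ℕ}
    (hL : f.support ⊆ range L) (φ : ℕ → ℕ → M) :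
    ∑ b ∈ cells f, φ (armL f b) (legL f b) =
      ∑ j ∈ range L, ∑ w ∈ range L, ∑ d ∈ Ico (f j - f (j + w)) (f j - f (j + w + 1)), φ d w := by
  rw [sum_cells_eq_sum_range hL]
  refine sum_congr rfl fun j _ => ?_
  have hmono : Monotone fun w => f j - f (j + w) := fun w w' h => by
    have := hf (show j + w ≤ j + w' by omega)
    dsimp only
    omega
  -- the box with arm `d` in row `j` lies in column `f j - 1 - d`
  have hblock : ∀ w, ∀ d ∈ Ico (f j - f (j + w)) (f j - f (j + w + 1)),
      φ d w = φ (armL f (f j - 1 - d, j)) (legL f (f j - 1 - d, j)) := by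
    intro w d hd
    have hd := mem_Ico.1 hd
    have h1 := hf (show j + w ≤ j + w + 1 by omega)
    have h2 := hf (show j ≤ j + w by omega)
    have hconj : conjPart f (f j - 1 - d) = j + w + 1 :=
      conjPart_eq_of_forall_lt_iff fun j' => by
        constructor
        · intro h
          by_contra h'
          have := hf (show j + w + 1 ≤ j' by omega)
          omega
        · intro h
          have := hf (show j' ≤ j + w by omega)
          omega
    simp only [armL, legL, hconj]
    congr 1 <;> omega
  have hfL : f (j + L) = 0 := Finsupp.notMem_support_iff.1 fun h => by simpa using hL h
  have hconcat := sum_range_sum_Ico_eq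
    (fun d => φ (armL f (f j - 1 - d, j)) (legL f (f j - 1 - d, j))) hmono L
  simp only [← add_assoc, add_zero, tsub_self, hfL, tsub_zero, ← range_eq_Ico] at hconcat
  rw [sum_congr rfl fun w _ => sum_congr rfl (hblock w), hconcat, ← sum_range_reflect]

theorem natCast_finsetSum_apply_sub {ι K : Type*} [AddCommGroupWithOne K] (lam : ι → ℕ →₀ ℕ)
    (hlam : ∀ i, Antitone (lam i)) (G : Finset ι) {j j' : ℕ} (h : j ≤ j') :
    (((∑ i ∈ G, lam i) j - (∑ i ∈ G, lam i) j' : ℕ) : K) =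
      ∑ i ∈ G, ((lam i j : K) - lam i j') := by
  simp only [Finsupp.finsetSum_apply]
  rw [Nat.cast_sub (sum_le_sum fun i _ => hlam i h)]
  push_cast
  rw [sum_sub_distrib]

theorem sum_powerset_neg_one_pow_mul_sum_cells_eq_zero {ι K : Type*} [Field K] [CharZero K]
    (lam : ι → ℕ →₀ ℕ) (hlam : ∀ i, Antitone (lam i)) (H : Finset ι) (c : ℕ → K) {p : ℕ}
    (hp : p + 1 < H.card) :
    ∑ G ∈ H.powerset, (-1) ^ (H.card - G.card) *
      ∑ b ∈ cells (∑ i ∈ G, lam i), c (legL (∑ i ∈ G, lam i) b) *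
        (armL (∑ i ∈ G, lam i) b : K) ^ p = 0 := by
  classical
  obtain ⟨Q, hQdeg, hQ⟩ := exists_degree_le_eval_eq_sum_range_pow K p
  obtain ⟨L, hL⟩ := exists_nat_subset_range (H.biUnion fun i => (lam i).support)
  have hdeg : Q.degree < H.card := hQdeg.trans_lt (by exact_mod_cast hp)
  have hblock : ∀ G ∈ H.powerset, ∑ b ∈ cells (∑ i ∈ G, lam i),
      c (legL (∑ i ∈ G, lam i) b) * (armL (∑ i ∈ G, lam i) b : K) ^ p =
      ∑ j ∈ range L, ∑ w ∈ range L, c w *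
        (Q.eval (∑ i ∈ G, ((lam i j : K) - lam i (j + w + 1))) -
          Q.eval (∑ i ∈ G, ((lam i j : K) - lam i (j + w)))) := by
    intro G hG
    have hanti : Antitone ⇑(∑ i ∈ G, lam i) := fun a b h => by
      simp only [Finsupp.finsetSum_apply]
      exact sum_le_sum fun i _ => hlam i h
    have hsupp : (∑ i ∈ G, lam i).support ⊆ range L := Finsupp.support_finsetSum.trans
      ((biUnion_subset_biUnion_of_subset_left _ (mem_powerset.1 hG)).trans hL)
    rw [sum_cells_eq hanti hsupp fun d w => c w * (d : K) ^ p]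
    refine sum_congr rfl fun j _ => sum_congr rfl fun w _ => ?_
    rw [← mul_sum, sum_Ico_eq_sub _ (by have := hanti (show j + w ≤ j + w + 1 by omega); omega),
      ← hQ, ← hQ, natCast_finsetSum_apply_sub lam hlam G (by omega),
      natCast_finsetSum_apply_sub lam hlam G (by omega)]
  rw [sum_congr rfl fun G hG => by rw [hblock G hG]]
  simp only [mul_sum, sum_comm (s := H.powerset)]
  refine sum_eq_zero fun j _ => sum_eq_zero fun w _ => ?_
  simp only [mul_sub, sum_sub_distrib (s := H.powerset), mul_left_comm _ (c w), ← mul_sum,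
    sum_powerset_neg_one_pow_mul_eval_eq_zero _ H Q hdeg, sub_self]

theorem prod_filter_even_prod_cells_eq_prod_filter_odd {ι : Type*} (lam : ι → ℕ →₀ ℕ)
    (hlam : ∀ i, Antitone (lam i)) (H : Finset ι) (hH : 2 ≤ H.card) :
    ∏ G ∈ H.powerset with Even (H.card - G.card),
        ∏ b ∈ cells (∑ i ∈ G, lam i), ((legL (∑ i ∈ G, lam i) b : ℚ) + 1) =
      ∏ G ∈ H.powerset with ¬Even (H.card - G.card),
        ∏ b ∈ cells (∑ i ∈ G, lam i), ((legL (∑ i ∈ G, lam i) b : ℚ) + 1) := by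
  have hlog := sum_powerset_neg_one_pow_mul_sum_cells_eq_zero (K := ℝ) lam hlam H
    (fun w => Real.log ((w : ℝ) + 1)) (p := 0) (by omega)
  simp only [pow_zero, mul_one] at hlog
  rw [sum_powerset_neg_one_pow_mul_eq_sub, sub_eq_zero] at hlog
  have hexp := congrArg Real.exp hlog
  simp only [Real.exp_sum, Real.exp_log (Nat.cast_add_one_pos _)] at hexp
  exact_mod_cast hexp

section Polynomial
open Polynomial

noncomputable def hookPoly (f : ℕ →₀ ℕ) : ℚ[X] :=
  ∏ b ∈ cells f, (C ((legL f b : ℚ) + 1) + C (armL f b : ℚ) * X)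

theorem hookA_eq_algebraMap_hookPoly (f : ℕ →₀ ℕ) :
    hookA f = algebraMap ℚ[X] (RatFunc ℚ) (hookPoly f) := by
  simp only [hookA, hookPoly, map_prod, map_add, map_mul, RatFunc.algebraMap_C,
    RatFunc.algebraMap_X]
  refine prod_congr rfl fun b _ => ?_
  simp only [map_natCast, map_one]
  ring

theorem hookPoly_eval_zero (f : ℕ →₀ ℕ) :
    (hookPoly f).eval 0 = ∏ b ∈ cells f, ((legL f b : ℚ) + 1) := by
  simp [hookPoly, eval_prod]

theorem isBigO_algebraMap_div_algebraMap_sub_one {N D : ℚ[X]} {k : ℕ} (hD : D.eval 0 ≠ 0)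
    (h : X ^ k ∣ N - D) :
    IsBigO k (algebraMap ℚ[X] (RatFunc ℚ) N / algebraMap ℚ[X] (RatFunc ℚ) D - 1) := by
  obtain ⟨q, hq⟩ := h
  have hD0 : algebraMap ℚ[X] (RatFunc ℚ) D ≠ 0 :=
    RatFunc.algebraMap_ne_zero fun h => hD (by simp [h])
  refine ⟨algebraMap _ _ q / algebraMap _ _ D, fun h0 => ?_, ?_⟩
  · obtain ⟨c, hc⟩ := RatFunc.denom_div_dvd q D
    exact hD (by rw [hc, eval_mul, h0, zero_mul])
  · rw [eq_add_of_sub_eq' hq, map_add, map_mul, map_pow, RatFunc.algebraMap_X]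
    field_simp
    ring

end Polynomial

section PowerSeries
open PowerSeries

theorem X_pow_succ_dvd_sub_C_constantCoeff {R : Type*} [CommRing R] [IsAddTorsionFree R]
    {f : R⟦X⟧} {k : ℕ} (h : X ^ k ∣ d⁄dX R f) : X ^ (k + 1) ∣ f - C (constantCoeff f) := by
  rw [PowerSeries.X_pow_dvd_iff] at h ⊢
  rintro (_ | m) hm
  · simp
  · have hm' := h m (by omega)
    rw [coeff_derivative, ← Nat.cast_succ, ← nsmul_eq_mul',
      nsmul_eq_zero_iff_right m.succ_ne_zero] at hm'
    simp [hm']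

theorem X_pow_succ_dvd_sub_of_X_pow_dvd_wronskian {K : Type*} [Field K] [CharZero K]
    {N D : K⟦X⟧} {k : ℕ} (hD : constantCoeff D ≠ 0) (hND : constantCoeff N = constantCoeff D)
    (h : X ^ k ∣ d⁄dX K N * D - N * d⁄dX K D) : X ^ (k + 1) ∣ N - D := by
  have hDD : D * D⁻¹ = 1 := PowerSeries.mul_inv_cancel D hD
  have hderiv : d⁄dX K (N * D⁻¹) = D⁻¹ ^ 2 * (d⁄dX K N * D - N * d⁄dX K D) := by
    rw [Derivation.leibniz, derivative_inv', smul_eq_mul, smul_eq_mul]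
    linear_combination (-(d⁄dX K N * D⁻¹)) * hDD
  have hconst : constantCoeff (N * D⁻¹) = 1 := by
    rw [map_mul, hND, ← map_mul, hDD, map_one]
  have hquot := X_pow_succ_dvd_sub_C_constantCoeff (hderiv ▸ dvd_mul_of_dvd_right h _)
  rw [hconst, map_one] at hquot
  rw [show N - D = D * (N * D⁻¹ - 1) by linear_combination (-N) * hDD]
  exact dvd_mul_of_dvd_right hquot D

theorem Derivation.map_prod_eq_mul_sum {R A β : Type*} [CommSemiring R] [CommSemiring A]
    [Algebra R A] (D : Derivation R A A) (s : Finset β) (p q : β → A)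
    (h : ∀ b ∈ s, D (p b) = p b * q b) :
    D (∏ b ∈ s, p b) = (∏ b ∈ s, p b) * ∑ b ∈ s, q b := by
  induction s using Finset.cons_induction with
  | empty => simp
  | cons a s ha ih =>
    rw [prod_cons, sum_cons, D.leibniz, ih fun b hb => h b (mem_cons_of_mem hb),
      h a (mem_cons_self a s), smul_eq_mul, smul_eq_mul]
    ring

theorem derivative_C_add_C_mul_X {K : Type*} [Field K] {c : K} (hc : c ≠ 0) (a : K) :
    d⁄dX K (C c + C a * X) =
      (C c + C a * X) * PowerSeries.mk fun i => (-1) ^ i / c ^ (i + 1) * a ^ (i + 1) := by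
  ext (_ | i)
  · simp [hc]
  · simp [add_mul, mul_assoc, mul_left_comm (C a) X, coeff_succ_X_mul, pow_succ]
    field_simp
    ring

noncomputable def hookLogDeriv (f : ℕ →₀ ℕ) : ℚ⟦X⟧ :=
  ∑ b ∈ cells f,
    mk fun i => (-1) ^ i / ((legL f b : ℚ) + 1) ^ (i + 1) * (armL f b : ℚ) ^ (i + 1)

theorem coe_hookPoly (f : ℕ →₀ ℕ) :
    (hookPoly f : ℚ⟦X⟧) = ∏ b ∈ cells f, (C ((legL f b : ℚ) + 1) + C (armL f b : ℚ) * X) := by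
  rw [hookPoly, ← Polynomial.coeToPowerSeries.ringHom_apply, map_prod]
  refine prod_congr rfl fun b _ => ?_
  simp only [Polynomial.coeToPowerSeries.ringHom_apply, Polynomial.coe_add, Polynomial.coe_mul,
    Polynomial.coe_C, Polynomial.coe_X]

theorem constantCoeff_coe_hookPoly (f : ℕ →₀ ℕ) :
    constantCoeff (hookPoly f : ℚ⟦X⟧) = ∏ b ∈ cells f, ((legL f b : ℚ) + 1) := by
  rw [Polynomial.constantCoeff_coe, Polynomial.coeff_zero_eq_eval_zero, hookPoly_eval_zero]

theorem derivative_coe_hookPoly (f : ℕ →₀ ℕ) :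
    d⁄dX ℚ (hookPoly f : ℚ⟦X⟧) = hookPoly f * hookLogDeriv f := by
  rw [coe_hookPoly, hookLogDeriv]
  exact (d⁄dX ℚ).map_prod_eq_mul_sum _ _ _ fun b _ =>
    derivative_C_add_C_mul_X (by positivity) _

theorem X_pow_dvd_sum_neg_one_pow_mul_hookLogDeriv {ι : Type*} (lam : ι → ℕ →₀ ℕ)
    (hlam : ∀ i, Antitone (lam i)) (H : Finset ι) :
    X ^ (H.card - 2) ∣
      ∑ G ∈ H.powerset, (-1) ^ (H.card - G.card) * hookLogDeriv (∑ i ∈ G, lam i) := by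
  rw [PowerSeries.X_pow_dvd_iff]
  intro m hm
  have := sum_powerset_neg_one_pow_mul_sum_cells_eq_zero lam hlam H
    (fun w => (-1) ^ m / ((w : ℚ) + 1) ^ (m + 1)) (p := m + 1) (by omega)
  simp_rw [show (-1 : ℚ⟦X⟧) = C (-1) by simp, ← map_pow]
  simpa only [hookLogDeriv, mul_sum, map_sum, coeff_C_mul, coeff_mk] using this

theorem X_pow_dvd_prod_even_hookPoly_sub_prod_odd {ι : Type*} (lam : ι → ℕ →₀ ℕ)
    (hlam : ∀ i, Antitone (lam i)) (H : Finset ι) (hH : 2 ≤ H.card) :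
    (Polynomial.X : Polynomial ℚ) ^ (H.card - 1) ∣
      ∏ G ∈ H.powerset with Even (H.card - G.card), hookPoly (∑ i ∈ G, lam i) -
        ∏ G ∈ H.powerset with ¬Even (H.card - G.card), hookPoly (∑ i ∈ G, lam i) := by
  refine X_pow_dvd_of_X_pow_dvd_coe ?_
  have hderiv := fun (S : Finset (Finset ι)) => (d⁄dX ℚ).map_prod_eq_mul_sum S _ _
    fun G _ => derivative_coe_hookPoly (∑ i ∈ G, lam i)
  rw [← Polynomial.coeToPowerSeries.ringHom_apply, map_sub, map_prod, map_prod,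
    show H.card - 1 = H.card - 2 + 1 by omega]
  simp only [Polynomial.coeToPowerSeries.ringHom_apply]
  refine X_pow_succ_dvd_sub_of_X_pow_dvd_wronskian ?_ ?_ ?_
  · simp only [map_prod, constantCoeff_coe_hookPoly]
    exact prod_ne_zero_iff.2 fun G _ => prod_ne_zero_iff.2 fun b _ => by positivity
  · simp only [map_prod, constantCoeff_coe_hookPoly]
    exact prod_filter_even_prod_cells_eq_prod_filter_odd lam hlam H hH
  · rw [hderiv, hderiv, show ∀ N D SN SD : ℚ⟦X⟧, N * SN * D - N * (D * SD) = N * D * (SN - SD)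
      by intros; ring, ← sum_powerset_neg_one_pow_mul_eq_sub]
    exact dvd_mul_of_dvd_right (X_pow_dvd_sum_neg_one_pow_mul_hookLogDeriv lam hlam H) _

end PowerSeries

/-- Strong factorization of α-hook polynomials: for partitions `λ¹,…,λ^r`,
`u_I = hook_α(λ^I)` with `λ^I = ⊕_{i∈I} λ^i`, and any `H` with `|H| ≥ 2`,
`∏_{G⊆H} u_G^{(-1)^{|H|-|G|}} − 1 = O(α^{|H|-1})`. -/
theorem stmt_15 (r : ℕ) (lam : Fin r → (ℕ →₀ ℕ))
    (hlam : ∀ i, Antitone ⇑(lam i))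
    (H : Finset (Fin r)) (hH : 2 ≤ H.card) :
    IsBigO (H.card - 1)
      ((∏ G ∈ H.powerset,
          hookA (∑ i ∈ G, lam i) ^ ((-1 : ℤ) ^ (H.card - G.card))) - 1) := by
  rw [prod_powerset_zpow_neg_one_pow_eq_div]
  simp only [hookA_eq_algebraMap_hookPoly, ← map_prod]
  refine isBigO_algebraMap_div_algebraMap_sub_one ?_
    (X_pow_dvd_prod_even_hookPoly_sub_prod_odd lam hlam H hH)
  rw [Polynomial.eval_prod]
  exact prod_ne_zero_iff.2 fun G _ => by rw [hookPoly_eval_zero]; positivity
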